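/- Let f_t = log((1 + √(t(2-t)))/(1-t)) for t ∈ (0,1). Then f_t = √(2t) + O(t^{3/2}) as t → 0⁺; more precisely, there exist C > 0 and δ > 0 such that |f_t - √(2t)| ≤ C·t^{3/2} for all t ∈ (0, δ). -/
import Mathlib

set_option maxHeartbeats 1000000 in
theorem f_t_expansion :
    ∃ C > (0:ℝ), ∃ δ > (0:ℝ), ∀ t ∈ Set.Ioo (0:ℝ) δ,
      |Real.log ((1 + Real.sqrt (t * (2 - t))) / (1 - t)) - Real.sqrt (2*t)|
        ≤ C * t ^ ((3:ℝ)/2) := by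
  refine ⟨20, by norm_num, 1/4, by norm_num, ?_⟩
  rintro t ⟨ht0, ht4⟩
  have h1t : (0:ℝ) < 1 - t := by linarith
  set u := Real.sqrt (t * (2 - t)) with hu
  set s := Real.sqrt (2 * t) with hs
  set st := Real.sqrt t with hstdef
  have htt : (0:ℝ) ≤ t * (2 - t) := by nlinarith
  have hu0 : 0 ≤ u := Real.sqrt_nonneg _
  have hs0 : 0 ≤ s := Real.sqrt_nonneg _
  have hst0 : 0 < st := Real.sqrt_pos.2 ht0
  have hu2 : u ^ 2 = t * (2 - t) := Real.sq_sqrt htt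
  have hs2 : s ^ 2 = 2 * t := Real.sq_sqrt (by linarith)
  have hst2 : st ^ 2 = t := Real.sq_sqrt ht0.le
  have hsqrt2 : (1:ℝ) ≤ Real.sqrt 2 ∧ Real.sqrt 2 ≤ 1.5 := by
    constructor
    · rw [show (1:ℝ) = Real.sqrt 1 by simp]
      exact Real.sqrt_le_sqrt (by norm_num)
    · rw [show (1.5:ℝ) = Real.sqrt (1.5^2) by rw [Real.sqrt_sq]; norm_num]
      exact Real.sqrt_le_sqrt (by norm_num)
  have hseq : s = Real.sqrt 2 * st := by
    rw [hs, hstdef, Real.sqrt_mul (by norm_num : (0:ℝ) ≤ 2)]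
  have hule : u ≤ 0.71 := by
    rw [show (0.71:ℝ) = Real.sqrt (0.71^2) by rw [Real.sqrt_sq]; norm_num]
    exact Real.sqrt_le_sqrt (by nlinarith)
  -- rewrite the power
  have h32 : t ^ ((3:ℝ)/2) = t * st := by
    rw [show (3:ℝ)/2 = 1 + 1/2 by norm_num, Real.rpow_add ht0, Real.rpow_one,
      hstdef, Real.sqrt_eq_rpow]
  -- split the log
  rw [Real.log_div (by positivity) (ne_of_gt h1t), h32]
  set L1 := Real.log (1 + u) with hL1
  set L2 := Real.log (1 - t) with hL2
  -- bound A := L1 - u + u^2/2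
  have hA := Real.abs_log_sub_add_sum_range_le (x := -u)
    (by rw [abs_neg, abs_of_nonneg hu0]; linarith) 2
  rw [abs_neg, abs_of_nonneg hu0] at hA
  simp only [Finset.sum_range_succ, Finset.sum_range_zero] at hA
  have hA' : |L1 - u + u^2/2| ≤ u^3 / (1 - u) := by
    have : (1:ℝ) - -u = 1 + u := by ring
    rw [this] at hA
    calc |L1 - u + u^2/2| = |(0 + (-u)^(0+1)/((0:ℕ)+1) + (-u)^(1+1)/((1:ℕ)+1)) + L1| := by
            norm_num; ring_nf
      _ ≤ u ^ (2+1) / (1 - u) := hA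
      _ = u^3 / (1 - u) := by norm_num
  have htst : (0:ℝ) ≤ t * st := by positivity
  have hus : u ≤ s := Real.sqrt_le_sqrt (by nlinarith)
  have hAbound : u^3 / (1 - u) ≤ 11 * (t * st) := by
    have hus15 : u ≤ 1.5 * st := by
      have : s ≤ 1.5 * st := by
        rw [hseq]; exact mul_le_mul_of_nonneg_right hsqrt2.2 hst0.le
      linarith
    have hu2le : u^2 ≤ 2 * t := by nlinarith
    have hu3 : u^3 ≤ 3 * (t * st) := by
      have := mul_le_mul hus15 hu2le (sq_nonneg u) (by positivity : (0:ℝ) ≤ 1.5 * st)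
      nlinarith [this]
    rw [div_le_iff₀ (by linarith : (0:ℝ) < 1 - u)]
    nlinarith [mul_le_mul_of_nonneg_left (by linarith : (0.29:ℝ) ≤ 1 - u) htst]
  -- bound B := u - s
  have hB : |u - s| ≤ t * st := by
    rw [abs_of_nonpos (by linarith), neg_sub]
    have h1 : (s - u) * (s + u) = t^2 := by linear_combination hs2 - hu2
    have hsu : st ≤ s + u := by
      have := mul_le_mul_of_nonneg_right hsqrt2.1 hst0.le
      rw [one_mul] at this
      rw [hseq]; linarith
    have h2 : (s - u) * st ≤ (t * st) * st := by
      calc (s - u) * st ≤ (s - u) * (s + u) :=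
            mul_le_mul_of_nonneg_left hsu (by linarith)
        _ = t^2 := h1
        _ = (t * st) * st := by rw [← hst2]; ring
    exact le_of_mul_le_mul_right h2 hst0
  -- bound D := -u^2/2 - L2
  have hD := Real.abs_log_sub_add_sum_range_le (x := t)
    (by rw [abs_of_nonneg ht0.le]; linarith) 2
  rw [abs_of_nonneg ht0.le] at hD
  simp only [Finset.sum_range_succ, Finset.sum_range_zero] at hD
  have hD1 : |t + t^2/2 + L2| ≤ t^3 / (1 - t) := by
    calc |t + t^2/2 + L2| = |(0 + t^(0+1)/((0:ℕ)+1) + t^(1+1)/((1:ℕ)+1)) + L2| := by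
            norm_num
      _ ≤ t ^ (2+1) / (1 - t) := hD
      _ = t^3 / (1 - t) := by norm_num
  have hD' : |-(u^2)/2 - L2| ≤ 2 * (t * st) := by
    have ht3 : t^3 / (1 - t) ≤ t^2 := by
      rw [div_le_iff₀ h1t]; nlinarith
    have heq : -(u^2)/2 - L2 = t^2 - (t + t^2/2 + L2) := by rw [hu2]; ring
    rw [heq]
    have ht2 : t^2 ≤ t * st := by nlinarith [hst0]
    calc |t^2 - (t + t^2/2 + L2)| ≤ |t^2| + |t + t^2/2 + L2| := abs_sub _ _
      _ ≤ t^2 + t^2 := by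
          rw [abs_of_nonneg (by positivity)]
          exact add_le_add le_rfl (hD1.trans ht3)
      _ ≤ 2 * (t * st) := by linarith
  -- combine
  have heq : L1 - L2 - s = (L1 - u + u^2/2) + ((u - s) + (-(u^2)/2 - L2)) := by ring
  rw [heq]
  calc |(L1 - u + u^2/2) + ((u - s) + (-(u^2)/2 - L2))|
      ≤ |L1 - u + u^2/2| + |(u - s) + (-(u^2)/2 - L2)| := abs_add_le _ _
    _ ≤ |L1 - u + u^2/2| + (|u - s| + |-(u^2)/2 - L2|) := by
        exact add_le_add le_rfl (abs_add_le _ _)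
    _ ≤ 11 * (t * st) + (t * st + 2 * (t * st)) := by
        exact add_le_add (hA'.trans hAbound) (add_le_add hB hD')
    _ ≤ 20 * (t * st) := by linarith
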